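/- arXiv:2208.08771 — 2 statements merged into one kernel-verified Lean document; each statement's English description precedes it below -/
import Mathlib

section
/- Infeasible-case membership in the symmetric neighborhood after the quasi-Newton step: let all the hypotheses of the infeasible-case quasi-Newton step theorem hold (infeasible two-step setup; α_dec + σ_max ≤ 1 − σ_min with α_dec ∈ (0,1); (1 − ᾱ_k)(x^k)ᵀz^k ≤ (x^{k+1})ᵀz^{k+1} ≤ (1 − α_dec·ᾱ_k)(x^k)ᵀz^k; γμ_{k+1} ≤ x^{k+1}_i z^{k+1}_i ≤ μ_{k+1}/γ; the composite-direction bounds with C₆ = (σ_max + γ^{−1} + 8β)(1 + 2C₃^{−1})γ^{−1/2}, β ≥ 1; componentwise bound |(ᾱ_kΔx^k + ᾱΔx′)_i (ᾱ_kΔz^k + ᾱΔz′)_i| ≤ C₆²n⁵μ_kᾱ_k²; κ = 2ω² + C₆², C₅ = C₃^{−1}σ_min/(C₃^{−1}σ_min + ((1+γ)/(1−γ))κ); step sizes ᾱ_k ∈ (0, min{1, ((1+C₃)ω²)^{−1}, C₅/n⁵}], ᾱ ∈ [(C₃C₅)^{−1}n⁵ᾱ_k², C₃^{−1}ᾱ_k]).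 Assume moreover residual vectors with (r_b^{k+2}, r_c^{k+2}) = (1 − ᾱ)(r_b^{k+1}, r_c^{k+1}) and ‖(r_b^{k+1}, r_c^{k+1})‖ ≤ (R₀/μ₀)·β·μ_{k+1} for constants R₀ ≥ 0, μ₀ > 0, and that γ ≥ 2·( −8β + √((8β + 2)² + 4/(3σ_min)) )^{−1}. Then the new iterate x^{k+2} = x^{k+1} + ᾱΔx′, z^{k+2} = z^{k+1} + ᾱΔz′ satisfies: ‖(r_b^{k+2}, r_c^{k+2})‖ ≤ (R₀/μ₀)·β·μ_{k+2}; x^{k+2} and z^{k+2} have positive components; γμ_{k+2} ≤ x^{k+2}_i z^{k+2}_i ≤ μ_{k+2}/γ for every i; and μ_{k+2} ≤ (1 − α_dec·ᾱ)·μ_{k+1}. -/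
open scoped BigOperators

/-!
Along the quasi-Newton direction the complementarity products satisfy, for every step `s`,
`(x^{k+1} + sΔx')∘(z^{k+1} + sΔz') = (1 - s) x^{k+1}∘z^{k+1} + sσ_{k+1}μ_{k+1} e + R(s)`,
with a second-order remainder `R(s)` built from `ᾱ_kΔx + sΔx'` and `Δx∘Δz`. The scaled bounds
on the Newton and composite directions give `|R(s)_i| ≤ 2κ n⁵ ᾱ_k² μ_k` on `[0, ᾱ]` and
`|R(ᾱ)_i| ≤ κ n⁵ ᾱ_k² μ_k`, and the choice of `C₅` makes `κ n⁵ ᾱ_k² μ_k ≤ M ᾱ μ_{k+1}` with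
`M = σ_min (1 - γ)/(1 + γ)`. An error of that size is exactly what the centering term
`ᾱ σ_{k+1} μ_{k+1}` absorbs in both neighbourhood inequalities, and the lower bound on `γ`
(which amounts to `3M ≤ γ`) keeps every product positive along the whole segment `[0, ᾱ]`,
so no component of `x` or `z` can cross zero.
-/

/-- Euclidean norm of a finitely-indexed real vector. -/
noncomputable def eucNorm {ι : Type*} [Fintype ι] (v : ι → ℝ) : ℝ :=
  Real.sqrt (∑ i, v i ^ 2)

lemma abs_le_eucNorm {ι : Type*} [Fintype ι] (v : ι → ℝ) (i : ι) : |v i| ≤ eucNorm v := by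
  rw [eucNorm, ← Real.sqrt_sq_eq_abs]
  exact Real.sqrt_le_sqrt (Finset.single_le_sum (fun j _ => sq_nonneg (v j)) (Finset.mem_univ i))

lemma eucNorm_const_mul {ι : Type*} [Fintype ι] (c : ℝ) (v : ι → ℝ) :
    eucNorm (fun i => c * v i) = |c| * eucNorm v := by
  simp only [eucNorm, mul_pow, ← Finset.mul_sum]
  rw [Real.sqrt_mul (sq_nonneg c), Real.sqrt_sq_eq_abs]

lemma eucNorm_sum_elim_const_mul {ι κ : Type*} [Fintype ι] [Fintype κ] (c : ℝ) (f : ι → ℝ)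
    (g : κ → ℝ) :
    eucNorm (Sum.elim (fun i => c * f i) (fun j => c * g j)) = |c| * eucNorm (Sum.elim f g) := by
  rw [← eucNorm_const_mul]
  congr 1
  funext j
  cases j <;> rfl

lemma sum_mul_div_natCast_nonneg {ι : Type*} [Fintype ι] {x z : ι → ℝ} (hx : ∀ i, 0 < x i)
    (hz : ∀ i, 0 < z i) (n : ℕ) : 0 ≤ (∑ i, x i * z i) / n :=
  div_nonneg (Finset.sum_nonneg fun i _ => (mul_pos (hx i) (hz i)).le) n.cast_nonneg

lemma abs_sum_div_card_le {ι : Type*} [Fintype ι] [Nonempty ι] {e : ι → ℝ} {b : ℝ}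
    (h : ∀ i, |e i| ≤ b) : |(∑ i, e i) / Fintype.card ι| ≤ b := by
  have hc : (0 : ℝ) < Fintype.card ι := by exact_mod_cast Fintype.card_pos
  rw [abs_div, abs_of_pos hc, div_le_iff₀ hc]
  calc |∑ i, e i| ≤ ∑ i, |e i| := Finset.abs_sum_le_sum_abs _ _
    _ ≤ ∑ _i : ι, b := Finset.sum_le_sum fun i _ => h i
    _ = b * Fintype.card ι := by simp [mul_comm]

lemma abs_add_mul_le_of_mem_Icc {p q s α : ℝ} (hs : s ∈ Set.Icc 0 α) :
    |p + s * q| ≤ |p| + |p + α * q| := by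
  obtain ⟨hs0, hsα⟩ := hs
  rcases hs0.eq_or_lt with rfl | hs0
  · simp
  have hα : 0 < α := hs0.trans_le hsα
  refine le_of_mul_le_mul_left ?_ hα
  calc α * |p + s * q| = |(α - s) * p + s * (p + α * q)| := by
        rw [← abs_of_pos hα, ← abs_mul, abs_of_pos hα]; ring_nf
    _ ≤ (α - s) * |p| + s * |p + α * q| := by
        refine (abs_add_le _ _).trans_eq ?_
        rw [abs_mul, abs_mul, abs_of_nonneg (sub_nonneg.2 hsα), abs_of_pos hs0]
    _ ≤ α * (|p| + |p + α * q|) := by nlinarith [abs_nonneg p, abs_nonneg (p + α * q)]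

lemma abs_mul_add_mul_le_of_mem_Icc {c a b s α αk U V : ℝ} (hs : s ∈ Set.Icc 0 α)
    (hαk : 0 ≤ αk) (ha : |c * a| ≤ U) (hab : |c * (αk * a + α * b)| ≤ V) :
    |c * (αk * a + s * b)| ≤ αk * U + V := by
  have h := abs_add_mul_le_of_mem_Icc (p := αk * (c * a)) (q := c * b) hs
  rw [abs_mul, abs_of_nonneg hαk] at h
  calc |c * (αk * a + s * b)| = |αk * (c * a) + s * (c * b)| := by ring_nf
    _ ≤ αk * |c * a| + |c * (αk * a + α * b)| := by convert h using 3; ring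
    _ ≤ αk * U + V := by gcongr

lemma abs_mul_le_of_abs_sqrt_div_mul_le {x z a b A B : ℝ} (hx : 0 < x) (hz : 0 < z)
    (ha : |√(z / x) * a| ≤ A) (hb : |√(x / z) * b| ≤ B) : |a * b| ≤ A * B := by
  have h : a * b = (√(z / x) * a) * (√(x / z) * b) := by
    rw [mul_mul_mul_comm, ← Real.sqrt_mul (div_nonneg hz.le hx.le),
      show z / x * (x / z) = 1 by field_simp, Real.sqrt_one, one_mul]
  rw [h, abs_mul]
  exact mul_le_mul ha hb (abs_nonneg _) ((abs_nonneg _).trans ha)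

lemma pos_add_mul_of_forall_ne_zero {a b α : ℝ} (ha : 0 < a) (hα : 0 ≤ α)
    (h : ∀ s ∈ Set.Icc 0 α, a + s * b ≠ 0) : 0 < a + α * b := by
  by_contra! hle
  have hb : 0 < -b := by nlinarith
  refine h (a / -b) ⟨div_nonneg ha.le hb.le, (div_le_iff₀ hb).2 (by linarith)⟩ ?_
  have : b ≠ 0 := by linarith
  field_simp
  ring

lemma rpow_five_div_two_eq_sqrt_pow {x : ℝ} (hx : 0 ≤ x) : x ^ ((5 : ℝ) / 2) = √x ^ 5 := by
  rw [Real.sqrt_eq_rpow, ← Real.rpow_natCast, ← Real.rpow_mul hx]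
  norm_num

lemma centering_margin_bounds {σ γ M : ℝ} (hσ : 0 < σ) (hγ0 : 0 < γ) (hγ1 : γ < 1)
    (hM : M = σ * (1 - γ) / (1 + γ)) : 0 ≤ M ∧ M ≤ σ ∧ (1 + γ) * M = σ * (1 - γ) := by
  subst hM
  refine ⟨div_nonneg (mul_nonneg hσ.le (by linarith)) (by linarith), ?_, by field_simp⟩
  rw [div_le_iff₀ (by linarith)]
  linarith [mul_pos hσ hγ0]

lemma qn_step_constants {σ γ κ C₃ C₅ M : ℝ} (hσ0 : 0 < σ) (hσ1 : σ < 1) (hγ0 : 0 < γ)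
    (hγ1 : γ < 1) (hκ : 1 ≤ κ) (hC₃ : 1 ≤ C₃)
    (hC₅ : C₅ = C₃⁻¹ * σ / (C₃⁻¹ * σ + (1 + γ) / (1 - γ) * κ))
    (hM : M = σ * (1 - γ) / (1 + γ)) :
    0 < C₅ ∧ C₅ < 1 / 2 ∧ κ * (C₃ * C₅) = M * (1 - C₅) := by
  have h1γ : 0 < 1 - γ := by linarith
  have hden : 0 < σ * (1 - γ) + C₃ * κ * (1 + γ) := by positivity
  replace hC₅ : C₅ = σ * (1 - γ) / (σ * (1 - γ) + C₃ * κ * (1 + γ)) := by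
    rw [hC₅]; field_simp
  refine ⟨hC₅ ▸ by positivity, ?_, ?_⟩
  · rw [hC₅, div_lt_iff₀ hden]
    nlinarith [mul_le_mul hC₃ hκ zero_le_one (by linarith)]
  · rw [hC₅, hM]
    field_simp
    ring

lemma one_le_composite_const {σ γ β C₃ : ℝ} (hσ : 0 ≤ σ) (hγ0 : 0 < γ) (hγ1 : γ ≤ 1)
    (hβ : 0 ≤ β) (hC₃ : 0 < C₃) :
    1 ≤ (σ + γ⁻¹ + 8 * β) * (1 + 2 * C₃⁻¹) * γ ^ (-(1:ℝ)/2) := by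
  refine one_le_mul_of_one_le_of_one_le (one_le_mul_of_one_le_of_one_le ?_ ?_) ?_
  · linarith [one_le_inv_iff₀.2 ⟨hγ0, hγ1⟩]
  · linarith [inv_pos.2 hC₃]
  · exact Real.one_le_rpow_of_pos_of_le_one_of_nonpos hγ0 hγ1 (by norm_num)

lemma three_mul_le_of_two_mul_inv_le {σ β γ M : ℝ} (hσ : 0 < σ) (hβ : 0 ≤ β) (hγ0 : 0 < γ)
    (hγ1 : γ < 1) (hM : M = σ * (1 - γ) / (1 + γ))
    (hγ : 2 * (-(8 * β) + √((8 * β + 2) ^ 2 + 4 / (3 * σ)))⁻¹ ≤ γ) :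
    3 * M ≤ γ := by
  set S := √((8 * β + 2) ^ 2 + 4 / (3 * σ))
  have hS2 : S ^ 2 = (8 * β + 2) ^ 2 + 4 / (3 * σ) := Real.sq_sqrt (by positivity)
  have hS : 8 * β + 2 ≤ S :=
    Real.le_sqrt_of_sq_le (by linarith [show 0 ≤ 4 / (3 * σ) by positivity])
  have hγS : 2 + 8 * β * γ ≤ γ * S := by
    rw [inv_eq_one_div, mul_one_div, div_le_iff₀ (by linarith)] at hγ
    linarith
  -- squaring `hγS` and cancelling the common terms leaves `γ² ≥ 3σ(1 - γ²)`
  have hsq : 3 * σ * (1 - γ) * (1 + γ) ≤ γ ^ 2 := by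
    have h := pow_le_pow_left₀ (by positivity) hγS 2
    rw [mul_pow, hS2] at h
    have h' : 4 / (3 * σ) * (3 * σ) = 4 := by field_simp
    nlinarith [mul_nonneg hβ (mul_nonneg hγ0.le (sub_nonneg.2 hγ1.le))]
  rw [hM, ← mul_div_assoc, div_le_iff₀ (by linarith)]
  nlinarith

lemma step_size_bounds {N C₃ C₅ αk α : ℝ} (hN : 1 ≤ N) (hC₃ : 1 ≤ C₃) (hC₅ : 0 < C₅)
    (hαk0 : 0 < αk) (hαk : αk ≤ C₅ / N)
    (hα : α ∈ Set.Icc ((C₃ * C₅)⁻¹ * N * αk ^ 2) (C₃⁻¹ * αk)) :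
    0 ≤ α ∧ α ≤ αk ∧ αk ≤ C₅ ∧ N * αk ^ 2 ≤ C₃ * C₅ * α := by
  have hC : 0 < C₃ * C₅ := mul_pos (by linarith) hC₅
  refine ⟨le_trans (by positivity) hα.1,
    hα.2.trans (mul_le_of_le_one_left hαk0.le (inv_le_one_of_one_le₀ hC₃)),
    hαk.trans (div_le_self hC₅.le hN), ?_⟩
  have := hα.1
  rwa [mul_assoc, inv_mul_le_iff₀ hC] at this

lemma remainder_scale_le {κ C₃ C₅ M N αk α μk μk1 : ℝ} (hκ : 0 ≤ κ) (hM0 : 0 ≤ M)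
    (hμk : 0 ≤ μk) (hα0 : 0 ≤ α) (hκC₅ : κ * (C₃ * C₅) = M * (1 - C₅))
    (hN : N * αk ^ 2 ≤ C₃ * C₅ * α) (hαk : αk ≤ C₅) (hμ : (1 - αk) * μk ≤ μk1) :
    κ * N * αk ^ 2 * μk ≤ M * (α * μk1) :=
  calc κ * N * αk ^ 2 * μk ≤ κ * (C₃ * C₅ * α) * μk := by
        rw [mul_assoc κ]; gcongr
    _ = M * α * ((1 - C₅) * μk) := by linear_combination α * μk * hκC₅
    _ ≤ M * α * ((1 - αk) * μk) := by gcongr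
    _ ≤ M * (α * μk1) := by rw [mul_assoc]; gcongr

lemma abs_one_add_mul_le {s α αk C₃ γ₁ r : ℝ} (hs : s ∈ Set.Icc 0 α) (hαk : 0 < αk)
    (hC₃ : 0 < C₃) (hr : 1 ≤ r) (hα : α ≤ C₃⁻¹ * αk) (hγ₁ : |γ₁| ≤ C₃ * r / αk) :
    |1 + s * γ₁| ≤ 2 * r := by
  have h : s * |γ₁| ≤ r :=
    calc s * |γ₁| ≤ (C₃⁻¹ * αk) * (C₃ * r / αk) :=
          mul_le_mul (hs.2.trans hα) hγ₁ (abs_nonneg _) (by positivity)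
      _ = r := by field_simp
  calc |1 + s * γ₁| ≤ 1 + s * |γ₁| := by
        refine (abs_add_le _ _).trans_eq ?_
        rw [abs_one, abs_mul, abs_of_nonneg hs.1]
    _ ≤ 2 * r := by linarith

lemma perturbed_product_mem_nbhd {γ σ M α μ μ' q e : ℝ} (hγ0 : 0 < γ) (hα0 : 0 ≤ α)
    (hα1 : α ≤ 1) (hμ : 0 ≤ μ) (hM : (1 + γ) * M ≤ σ * (1 - γ))
    (hq : γ * μ ≤ q ∧ q ≤ μ / γ) (he : |e| ≤ M * (α * μ))
    (hμ' : |μ' - ((1 - α) * μ + α * (σ * μ))| ≤ M * (α * μ)) :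
    γ * μ' ≤ (1 - α) * q + α * (σ * μ) + e ∧ (1 - α) * q + α * (σ * μ) + e ≤ μ' / γ := by
  obtain ⟨he1, he2⟩ := abs_le.1 he
  obtain ⟨hμ1, hμ2⟩ := abs_le.1 hμ'
  have hq2 : γ * q ≤ μ := by rw [le_div_iff₀ hγ0] at hq; linarith [hq.2]
  have key : (α * μ) * ((1 + γ) * M) ≤ (α * μ) * (σ * (1 - γ)) :=
    mul_le_mul_of_nonneg_left hM (mul_nonneg hα0 hμ)
  constructor
  · nlinarith [mul_le_mul_of_nonneg_left hq.1 (sub_nonneg.2 hα1)]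
  · rw [le_div_iff₀ hγ0]
    nlinarith [mul_le_mul_of_nonneg_left hq2 (sub_nonneg.2 hα1)]

theorem perturbed_step_mem_nbhd {ι : Type*} [Fintype ι] [Nonempty ι] {x z dx dz : ι → ℝ}
    {R : ℝ → ι → ℝ} {γ σ M α μ μ' : ℝ} (hx : ∀ i, 0 < x i) (hz : ∀ i, 0 < z i)
    (hμ : μ = (∑ i, x i * z i) / Fintype.card ι)
    (hμ' : μ' = (∑ i, (x i + α * dx i) * (z i + α * dz i)) / Fintype.card ι)
    (hnbr : ∀ i, γ * μ ≤ x i * z i ∧ x i * z i ≤ μ / γ)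
    (hγ0 : 0 < γ) (hσ : 0 ≤ σ) (hM : (1 + γ) * M ≤ σ * (1 - γ)) (hα0 : 0 ≤ α) (hα : α < 1 / 2)
    (hprod : ∀ s i, (x i + s * dx i) * (z i + s * dz i)
      = (1 - s) * (x i * z i) + s * (σ * μ) + R s i)
    (hR : ∀ s ∈ Set.Icc 0 α, ∀ i, |R s i| ≤ γ * (α * μ))
    (hRα : ∀ i, |R α i| ≤ M * (α * μ)) :
    (∀ i, 0 < x i + α * dx i) ∧ (∀ i, 0 < z i + α * dz i) ∧
      |μ' - ((1 - α) * μ + α * (σ * μ))| ≤ M * (α * μ) ∧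
      ∀ i, γ * μ' ≤ (x i + α * dx i) * (z i + α * dz i) ∧
        (x i + α * dx i) * (z i + α * dz i) ≤ μ' / γ := by
  have hμ0 : 0 < μ := by
    obtain ⟨i⟩ := ‹Nonempty ι›
    have := (hnbr i).2
    rw [le_div_iff₀ hγ0] at this
    nlinarith [mul_pos (hx i) (hz i)]
  have hmean : |μ' - ((1 - α) * μ + α * (σ * μ))| ≤ M * (α * μ) := by
    have hc : (Fintype.card ι : ℝ) ≠ 0 := by positivity
    have : μ' - ((1 - α) * μ + α * (σ * μ)) = (∑ i, R α i) / Fintype.card ι := by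
      simp only [hμ', hμ, hprod, Finset.sum_add_distrib, ← Finset.mul_sum, Finset.sum_const,
        Finset.card_univ, nsmul_eq_mul]
      field_simp
      ring
    rw [this]
    exact abs_sum_div_card_le hRα
  have hpos : ∀ s ∈ Set.Icc 0 α, ∀ i, 0 < (x i + s * dx i) * (z i + s * dz i) := by
    intro s hs i
    rw [hprod]
    have := (abs_le.1 (hR s hs i)).1
    nlinarith [mul_le_mul_of_nonneg_left (hnbr i).1 (by linarith [hs.2] : 0 ≤ 1 - s),
      mul_nonneg hs.1 (mul_nonneg hσ hμ0.le), mul_pos hγ0 hμ0, hs.2]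
  refine ⟨fun i => pos_add_mul_of_forall_ne_zero (hx i) hα0 fun s hs h => ?_,
    fun i => pos_add_mul_of_forall_ne_zero (hz i) hα0 fun s hs h => ?_, hmean, fun i => ?_⟩
  · simpa [h] using hpos s hs i
  · simpa [h] using hpos s hs i
  · rw [hprod]
    exact perturbed_product_mem_nbhd hγ0 hα0 (by linarith) hμ0.le hM (hnbr i) (hRα i) hmean

/-- The remainder `R(s)_i` of the header, written in the components `dx = Δx_i`, `dz = Δz_i`,
`dx' = Δx'_i`, `dz' = Δz'_i`. -/
def qnRemainder (αk γ₁ s dx dz dx' dz' : ℝ) : ℝ :=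
  (αk * dx + s * dx') * (αk * dz + s * dz') - (1 + s * γ₁) * αk ^ 2 * (dx * dz)

lemma qn_step_mul_eq {xk zk dx dz dx' dz' αk γ₁ c : ℝ}
    (hQN : zk * dx' + xk * dz' = c - (xk + αk * dx) * (zk + αk * dz) - γ₁ * αk ^ 2 * (dx * dz))
    (s : ℝ) :
    (xk + αk * dx + s * dx') * (zk + αk * dz + s * dz')
      = (1 - s) * ((xk + αk * dx) * (zk + αk * dz)) + s * c
        + qnRemainder αk γ₁ s dx dz dx' dz' := by
  unfold qnRemainder
  linear_combination s * hQN

lemma abs_qnRemainder_le_add (αk γ₁ s dx dz dx' dz' : ℝ) :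
    |qnRemainder αk γ₁ s dx dz dx' dz'|
      ≤ |(αk * dx + s * dx') * (αk * dz + s * dz')| + |1 + s * γ₁| * αk ^ 2 * |dx * dz| := by
  refine (abs_sub _ _).trans_eq ?_
  simp only [abs_mul, abs_of_nonneg (sq_nonneg αk)]

section RemainderBounds

variable {n : ℕ} {xk zk Δx Δz Δx' Δz' : Fin n → ℝ} {ω C₆ μk αk α s γ₁ : ℝ}

lemma abs_one_add_mul_mul_newton_le (hn : 1 ≤ n) (hxk : ∀ i, 0 < xk i) (hzk : ∀ i, 0 < zk i)
    (hμk : 0 ≤ μk)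
    (hDx : eucNorm (fun i => √(zk i / xk i) * Δx i) ≤ ω * n * √μk)
    (hDz : eucNorm (fun i => √(xk i / zk i) * Δz i) ≤ ω * n * √μk)
    (hγ₁ : |1 + s * γ₁| ≤ 2 * √n) (i : Fin n) :
    |1 + s * γ₁| * αk ^ 2 * |Δx i * Δz i| ≤ 2 * ω ^ 2 * n ^ 5 * αk ^ 2 * μk := by
  have hΔ := abs_mul_le_of_abs_sqrt_div_mul_le (hxk i) (hzk i)
    ((abs_le_eucNorm _ i).trans hDx) ((abs_le_eucNorm _ i).trans hDz)
  set r := √(n : ℝ)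
  have hr : 1 ≤ r := Real.one_le_sqrt.2 (by exact_mod_cast hn)
  have hnr : (n : ℝ) = r ^ 2 := (Real.sq_sqrt (Nat.cast_nonneg n)).symm
  rw [hnr] at hΔ ⊢
  calc |1 + s * γ₁| * αk ^ 2 * |Δx i * Δz i|
      ≤ 2 * r * αk ^ 2 * (ω * r ^ 2 * √μk * (ω * r ^ 2 * √μk)) := by gcongr
    _ = 2 * ω ^ 2 * r ^ 5 * αk ^ 2 * μk := by
        linear_combination 2 * ω ^ 2 * r ^ 5 * αk ^ 2 * Real.sq_sqrt hμk
    _ ≤ 2 * ω ^ 2 * (r ^ 2) ^ 5 * αk ^ 2 * μk := by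
        gcongr
        exact le_self_pow₀ hr two_ne_zero

lemma abs_qnRemainder_at_step_le (hn : 1 ≤ n) (hxk : ∀ i, 0 < xk i) (hzk : ∀ i, 0 < zk i)
    (hμk : 0 ≤ μk)
    (hDx : eucNorm (fun i => √(zk i / xk i) * Δx i) ≤ ω * n * √μk)
    (hDz : eucNorm (fun i => √(xk i / zk i) * Δz i) ≤ ω * n * √μk)
    (hγ₁ : |1 + α * γ₁| ≤ 2 * √n)
    (hcompwise : ∀ i, |(αk * Δx i + α * Δx' i) * (αk * Δz i + α * Δz' i)|
      ≤ C₆ ^ 2 * (n:ℝ) ^ 5 * μk * αk ^ 2) (i : Fin n) :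
    |qnRemainder αk γ₁ α (Δx i) (Δz i) (Δx' i) (Δz' i)|
      ≤ (2 * ω ^ 2 + C₆ ^ 2) * n ^ 5 * αk ^ 2 * μk := by
  have := abs_one_add_mul_mul_newton_le (αk := αk) hn hxk hzk hμk hDx hDz hγ₁ i
  linarith [abs_qnRemainder_le_add αk γ₁ α (Δx i) (Δz i) (Δx' i) (Δz' i), hcompwise i]

lemma abs_qnRemainder_le_of_mem_Icc (hn : 1 ≤ n) (hxk : ∀ i, 0 < xk i) (hzk : ∀ i, 0 < zk i)
    (hμk : 0 ≤ μk) (hαk : 0 ≤ αk)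
    (hDx : eucNorm (fun i => √(zk i / xk i) * Δx i) ≤ ω * n * √μk)
    (hDz : eucNorm (fun i => √(xk i / zk i) * Δz i) ≤ ω * n * √μk)
    (hcomb1 : eucNorm (fun i => √(zk i / xk i) * (αk * Δx i + α * Δx' i))
      ≤ C₆ * αk * (n:ℝ) ^ ((5:ℝ)/2) * μk ^ ((1:ℝ)/2))
    (hcomb2 : eucNorm (fun i => √(xk i / zk i) * (αk * Δz i + α * Δz' i))
      ≤ C₆ * αk * (n:ℝ) ^ ((5:ℝ)/2) * μk ^ ((1:ℝ)/2))
    (hs : s ∈ Set.Icc 0 α) (hγ₁ : |1 + s * γ₁| ≤ 2 * √n) (i : Fin n) :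
    |qnRemainder αk γ₁ s (Δx i) (Δz i) (Δx' i) (Δz' i)|
      ≤ 2 * ((2 * ω ^ 2 + C₆ ^ 2) * n ^ 5 * αk ^ 2 * μk) := by
  have hprod := abs_mul_le_of_abs_sqrt_div_mul_le (hxk i) (hzk i)
    (abs_mul_add_mul_le_of_mem_Icc hs hαk ((abs_le_eucNorm _ i).trans hDx)
      ((abs_le_eucNorm _ i).trans hcomb1))
    (abs_mul_add_mul_le_of_mem_Icc hs hαk ((abs_le_eucNorm _ i).trans hDz)
      ((abs_le_eucNorm _ i).trans hcomb2))
  have hnewton := abs_one_add_mul_mul_newton_le (αk := αk) hn hxk hzk hμk hDx hDz hγ₁ i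
  set r := √(n : ℝ)
  have hr : 1 ≤ r := Real.one_le_sqrt.2 (by exact_mod_cast hn)
  have hnr : (n : ℝ) = r ^ 2 := (Real.sq_sqrt (Nat.cast_nonneg n)).symm
  rw [rpow_five_div_two_eq_sqrt_pow (Nat.cast_nonneg n), ← Real.sqrt_eq_rpow] at hprod
  have hsq : (αk * (ω * n * √μk) + C₆ * αk * r ^ 5 * √μk) ^ 2
      ≤ 2 * (ω ^ 2 + C₆ ^ 2) * n ^ 5 * αk ^ 2 * μk := by
    have h : (ω * r ^ 2 + C₆ * r ^ 5) ^ 2 ≤ 2 * (ω ^ 2 + C₆ ^ 2) * r ^ 10 := by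
      nlinarith [sq_nonneg (ω * r ^ 2 - C₆ * r ^ 5),
        mul_le_mul_of_nonneg_left (pow_le_pow_right₀ hr (by norm_num : 4 ≤ 10)) (sq_nonneg ω)]
    calc _ = αk ^ 2 * √μk ^ 2 * (ω * r ^ 2 + C₆ * r ^ 5) ^ 2 := by rw [hnr]; ring
      _ ≤ αk ^ 2 * √μk ^ 2 * (2 * (ω ^ 2 + C₆ ^ 2) * r ^ 10) := by gcongr
      _ = _ := by rw [Real.sq_sqrt hμk, hnr]; ring
  nlinarith [abs_qnRemainder_le_add αk γ₁ s (Δx i) (Δz i) (Δx' i) (Δz' i)]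

end RemainderBounds

theorem inf_qn_step_neighborhood_membership_general
    (n m : ℕ) (hn : 1 ≤ n)
    (γ σmin σmax ω C₃ : ℝ)
    (hγ : γ ∈ Set.Ioo (0:ℝ) 1)
    (hσ0 : 0 < σmin) (hσ : σmin ≤ σmax) (hσ1 : σmax < 1)
    (hC₃ : 1 ≤ C₃)
    (xk zk xk1 zk1 : Fin n → ℝ)
    (hxk : ∀ i, 0 < xk i) (hzk : ∀ i, 0 < zk i)
    (hxk1pos : ∀ i, 0 < xk1 i) (hzk1pos : ∀ i, 0 < zk1 i)
    (μk μk1 : ℝ)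
    (hμk : μk = (∑ i, xk i * zk i) / n)
    (hμk1 : μk1 = (∑ i, xk1 i * zk1 i) / n)
    (σk1 αk α : ℝ)
    (hσk1 : σmin ≤ σk1 ∧ σk1 ≤ σmax)
    (Δx Δz : Fin n → ℝ)
    (hDx : eucNorm (fun i => Real.sqrt (zk i / xk i) * Δx i) ≤ ω * n * Real.sqrt μk)
    (hDz : eucNorm (fun i => Real.sqrt (xk i / zk i) * Δz i) ≤ ω * n * Real.sqrt μk)
    (hxk1 : xk1 = fun i => xk i + αk * Δx i)
    (hzk1 : zk1 = fun i => zk i + αk * Δz i)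
    (γ₁ : ℝ) (hγ₁ : |γ₁| ≤ C₃ * Real.sqrt n / αk)
    (Δx' Δz' : Fin n → ℝ)
    (hQN : ∀ i, zk i * Δx' i + xk i * Δz' i
      = σk1 * μk1 - xk1 i * zk1 i - γ₁ * αk ^ 2 * (Δx i * Δz i))
    (αdec : ℝ)
    (hαdecσ : αdec + σmax ≤ 1 - σmin)
    (hmono1 : (1 - αk) * (∑ i, xk i * zk i) ≤ ∑ i, xk1 i * zk1 i)
    (hNbr1 : ∀ i, γ * μk1 ≤ xk1 i * zk1 i ∧ xk1 i * zk1 i ≤ μk1 / γ)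
    (β C₆ : ℝ) (hβ : 1 ≤ β)
    (hC₆ : C₆ = (σmax + γ⁻¹ + 8 * β) * (1 + 2 * C₃⁻¹) * γ ^ (-(1:ℝ)/2))
    (hcomb1 : eucNorm (fun i => Real.sqrt (zk i / xk i) * (αk * Δx i + α * Δx' i))
      ≤ C₆ * αk * (n:ℝ) ^ ((5:ℝ)/2) * μk ^ ((1:ℝ)/2))
    (hcomb2 : eucNorm (fun i => Real.sqrt (xk i / zk i) * (αk * Δz i + α * Δz' i))
      ≤ C₆ * αk * (n:ℝ) ^ ((5:ℝ)/2) * μk ^ ((1:ℝ)/2))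
    (hcompwise : ∀ i, |(αk * Δx i + α * Δx' i) * (αk * Δz i + α * Δz' i)|
      ≤ C₆ ^ 2 * (n:ℝ) ^ 5 * μk * αk ^ 2)
    (κ C₅ : ℝ)
    (hκ : κ = 2 * ω ^ 2 + C₆ ^ 2)
    (hC₅ : C₅ = C₃⁻¹ * σmin / (C₃⁻¹ * σmin + (1 + γ) / (1 - γ) * κ))
    (hαk : αk ∈ Set.Ioc (0:ℝ)
      (min 1 (min (((1 + C₃) * ω ^ 2)⁻¹) (C₅ / (n:ℝ) ^ 5))))
    (hα : α ∈ Set.Icc ((C₃ * C₅)⁻¹ * (n:ℝ) ^ 5 * αk ^ 2) (C₃⁻¹ * αk))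
    -- residual hypotheses
    (rb1 rb2 : Fin m → ℝ) (rc1 rc2 : Fin n → ℝ)
    (hrb2 : rb2 = fun i => (1 - α) * rb1 i)
    (hrc2 : rc2 = fun i => (1 - α) * rc1 i)
    (R0 μ0 : ℝ) (hR0 : 0 ≤ R0) (hμ0 : 0 < μ0)
    (hres1 : eucNorm (Sum.elim rb1 rc1) ≤ R0 / μ0 * β * μk1)
    (hγbig : 2 * (-(8 * β) + Real.sqrt ((8 * β + 2) ^ 2 + 4 / (3 * σmin)))⁻¹ ≤ γ)
    (xk2 zk2 : Fin n → ℝ)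
    (hxk2 : xk2 = fun i => xk1 i + α * Δx' i)
    (hzk2 : zk2 = fun i => zk1 i + α * Δz' i)
    (μk2 : ℝ) (hμk2 : μk2 = (∑ i, xk2 i * zk2 i) / n) :
    eucNorm (Sum.elim rb2 rc2) ≤ R0 / μ0 * β * μk2 ∧
    (∀ i, 0 < xk2 i) ∧ (∀ i, 0 < zk2 i) ∧
    (∀ i, γ * μk2 ≤ xk2 i * zk2 i ∧ xk2 i * zk2 i ≤ μk2 / γ) ∧
    μk2 ≤ (1 - αdec * α) * μk1 := by
  obtain ⟨hγ0, hγ1⟩ := hγ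
  obtain ⟨hαk0, hαk⟩ := hαk
  have : Nonempty (Fin n) := Fin.pos_iff_nonempty.mp hn
  have hn1 : (1 : ℝ) ≤ n := by exact_mod_cast hn
  have hμk0 : 0 ≤ μk := hμk ▸ sum_mul_div_natCast_nonneg hxk hzk n
  have hμk10 : 0 ≤ μk1 := hμk1 ▸ sum_mul_div_natCast_nonneg hxk1pos hzk1pos n
  set M := σmin * (1 - γ) / (1 + γ) with hM
  obtain ⟨hM0, hMσ, hM1⟩ := centering_margin_bounds hσ0 hγ0 hγ1 hM
  have hκ1 : 1 ≤ κ := by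
    have := one_le_composite_const (β := β) (C₃ := C₃) (hσ0.le.trans hσ) hγ0 hγ1.le
      (by linarith) (by linarith)
    rw [← hC₆] at this
    rw [hκ]
    linarith [sq_nonneg ω, one_le_pow₀ (n := 2) this]
  obtain ⟨hC₅0, hC₅half, hκC₅⟩ :=
    qn_step_constants hσ0 (hσ.trans_lt hσ1) hγ0 hγ1 hκ1 hC₃ hC₅ hM
  obtain ⟨hα0, hααk, hαkC₅, hαN⟩ := step_size_bounds (one_le_pow₀ hn1) hC₃ hC₅0 hαk0
    (hαk.trans <| (min_le_right _ _).trans (min_le_right _ _)) hα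
  have hαμ : 0 ≤ α * μk1 := mul_nonneg hα0 hμk10
  have hK : κ * n ^ 5 * αk ^ 2 * μk ≤ M * (α * μk1) :=
    remainder_scale_le (by linarith) hM0 hμk0 hα0 hκC₅ hαN hαkC₅
      (by rw [hμk, hμk1, ← mul_div_assoc]; gcongr)
  have h3M := three_mul_le_of_two_mul_inv_le hσ0 (by linarith) hγ0 hγ1 hM hγbig
  have hγ₁s : ∀ s ∈ Set.Icc 0 α, |1 + s * γ₁| ≤ 2 * √n := fun s hs =>
    abs_one_add_mul_le hs hαk0 (by linarith) (Real.one_le_sqrt.2 hn1) hα.2 hγ₁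
  obtain ⟨hx2, hz2, hμ2, hnbr2⟩ := perturbed_step_mem_nbhd (dx := Δx') (dz := Δz')
    (R := fun s i => qnRemainder αk γ₁ s (Δx i) (Δz i) (Δx' i) (Δz' i)) (μ' := μk2)
    hxk1pos hzk1pos (by rw [Fintype.card_fin]; exact hμk1)
    (by rw [Fintype.card_fin, hμk2, hxk2, hzk2]) hNbr1 hγ0 (hσ0.le.trans hσk1.1)
    (by rw [hM1]; exact mul_le_mul_of_nonneg_right hσk1.1 (by linarith))
    hα0 ((hααk.trans hαkC₅).trans_lt hC₅half)
    (fun s i => by subst hxk1 hzk1; exact qn_step_mul_eq (hQN i) s)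
    (fun s hs i => (abs_qnRemainder_le_of_mem_Icc hn hxk hzk hμk0 hαk0.le hDx hDz hcomb1 hcomb2
      hs (hγ₁s s hs) i).trans (by rw [← hκ]; nlinarith only [hK, h3M, hM0, hαμ]))
    (fun i => (abs_qnRemainder_at_step_le hn hxk hzk hμk0 hDx hDz (hγ₁s α ⟨hα0, le_rfl⟩)
      hcompwise i).trans (hκ ▸ hK))
  obtain ⟨hμ2lo, hμ2hi⟩ := abs_le.1 hμ2
  have h1α : 0 ≤ 1 - α := by linarith only [hααk, hαkC₅, hC₅half]
  have hμ2lo' : (1 - α) * μk1 ≤ μk2 := by nlinarith only [hμ2lo, hMσ, hσk1.1, hαμ]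
  subst hxk2 hzk2
  refine ⟨?_, hx2, hz2, hnbr2, by nlinarith only [hμ2hi, hMσ, hσk1.2, hαμ, hαdecσ]⟩
  rw [hrb2, hrc2, eucNorm_sum_elim_const_mul, abs_of_nonneg h1α]
  have hc : 0 ≤ R0 / μ0 * β := mul_nonneg (div_nonneg hR0 hμ0.le) (by linarith)
  nlinarith only [mul_le_mul_of_nonneg_left hres1 h1α, mul_le_mul_of_nonneg_left hμ2lo' hc]

/-- Infeasible-case membership in the symmetric neighborhood after the
quasi-Newton step. -/
theorem inf_qn_step_neighborhood_membership
    (n m : ℕ) (hn : 1 ≤ n) (hm : 1 ≤ m)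
    (γ σmin σmax ω C₃ : ℝ)
    (hγ : γ ∈ Set.Ioo (0:ℝ) 1)
    (hσ0 : 0 < σmin) (hσ : σmin ≤ σmax) (hσ1 : σmax < 1)
    (hω : 0 < ω) (hC₃ : 1 ≤ C₃)
    (xk zk xk1 zk1 : Fin n → ℝ)
    (hxk : ∀ i, 0 < xk i) (hzk : ∀ i, 0 < zk i)
    (hxk1pos : ∀ i, 0 < xk1 i) (hzk1pos : ∀ i, 0 < zk1 i)
    (μk μk1 : ℝ)
    (hμk : μk = (∑ i, xk i * zk i) / n)
    (hμk1 : μk1 = (∑ i, xk1 i * zk1 i) / n)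
    (hNbr : ∀ i, γ * μk ≤ xk i * zk i ∧ xk i * zk i ≤ μk / γ)
    (σk σk1 αk α : ℝ)
    (hσk : σmin ≤ σk ∧ σk ≤ σmax) (hσk1 : σmin ≤ σk1 ∧ σk1 ≤ σmax)
    (Δx Δz : Fin n → ℝ)
    (hNewton : ∀ i, zk i * Δx i + xk i * Δz i = σk * μk - xk i * zk i)
    (hDx : eucNorm (fun i => Real.sqrt (zk i / xk i) * Δx i) ≤ ω * n * Real.sqrt μk)
    (hDz : eucNorm (fun i => Real.sqrt (xk i / zk i) * Δz i) ≤ ω * n * Real.sqrt μk)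
    (hxk1 : xk1 = fun i => xk i + αk * Δx i)
    (hzk1 : zk1 = fun i => zk i + αk * Δz i)
    (γ₁ : ℝ) (hγ₁ : |γ₁| ≤ C₃ * Real.sqrt n / αk)
    (Δx' Δz' : Fin n → ℝ)
    (hQN : ∀ i, zk i * Δx' i + xk i * Δz' i
      = σk1 * μk1 - xk1 i * zk1 i - γ₁ * αk ^ 2 * (Δx i * Δz i))
    (αdec : ℝ) (hαdec : αdec ∈ Set.Ioo (0:ℝ) 1)
    (hαdecσ : αdec + σmax ≤ 1 - σmin)
    (hmono1 : (1 - αk) * (∑ i, xk i * zk i) ≤ ∑ i, xk1 i * zk1 i)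
    (hmono2 : (∑ i, xk1 i * zk1 i) ≤ (1 - αdec * αk) * (∑ i, xk i * zk i))
    (hNbr1 : ∀ i, γ * μk1 ≤ xk1 i * zk1 i ∧ xk1 i * zk1 i ≤ μk1 / γ)
    (β C₆ : ℝ) (hβ : 1 ≤ β)
    (hC₆ : C₆ = (σmax + γ⁻¹ + 8 * β) * (1 + 2 * C₃⁻¹) * γ ^ (-(1:ℝ)/2))
    (hcomb1 : eucNorm (fun i => Real.sqrt (zk i / xk i) * (αk * Δx i + α * Δx' i))
      ≤ C₆ * αk * (n:ℝ) ^ ((5:ℝ)/2) * μk ^ ((1:ℝ)/2))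
    (hcomb2 : eucNorm (fun i => Real.sqrt (xk i / zk i) * (αk * Δz i + α * Δz' i))
      ≤ C₆ * αk * (n:ℝ) ^ ((5:ℝ)/2) * μk ^ ((1:ℝ)/2))
    (hcompwise : ∀ i, |(αk * Δx i + α * Δx' i) * (αk * Δz i + α * Δz' i)|
      ≤ C₆ ^ 2 * (n:ℝ) ^ 5 * μk * αk ^ 2)
    (κ C₅ : ℝ)
    (hκ : κ = 2 * ω ^ 2 + C₆ ^ 2)
    (hC₅ : C₅ = C₃⁻¹ * σmin / (C₃⁻¹ * σmin + (1 + γ) / (1 - γ) * κ))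
    (hαk : αk ∈ Set.Ioc (0:ℝ)
      (min 1 (min (((1 + C₃) * ω ^ 2)⁻¹) (C₅ / (n:ℝ) ^ 5))))
    (hα : α ∈ Set.Icc ((C₃ * C₅)⁻¹ * (n:ℝ) ^ 5 * αk ^ 2) (C₃⁻¹ * αk))
    -- residual hypotheses
    (rb1 rb2 : Fin m → ℝ) (rc1 rc2 : Fin n → ℝ)
    (hrb2 : rb2 = fun i => (1 - α) * rb1 i)
    (hrc2 : rc2 = fun i => (1 - α) * rc1 i)
    (R0 μ0 : ℝ) (hR0 : 0 ≤ R0) (hμ0 : 0 < μ0)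
    (hres1 : eucNorm (Sum.elim rb1 rc1) ≤ R0 / μ0 * β * μk1)
    (hγbig : 2 * (-(8 * β) + Real.sqrt ((8 * β + 2) ^ 2 + 4 / (3 * σmin)))⁻¹ ≤ γ)
    (xk2 zk2 : Fin n → ℝ)
    (hxk2 : xk2 = fun i => xk1 i + α * Δx' i)
    (hzk2 : zk2 = fun i => zk1 i + α * Δz' i)
    (μk2 : ℝ) (hμk2 : μk2 = (∑ i, xk2 i * zk2 i) / n) :
    eucNorm (Sum.elim rb2 rc2) ≤ R0 / μ0 * β * μk2 ∧
    (∀ i, 0 < xk2 i) ∧ (∀ i, 0 < zk2 i) ∧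
    (∀ i, γ * μk2 ≤ xk2 i * zk2 i ∧ xk2 i * zk2 i ≤ μk2 / γ) ∧
    μk2 ≤ (1 - αdec * α) * μk1 :=
  inf_qn_step_neighborhood_membership_general n m hn γ σmin σmax ω C₃ hγ hσ0 hσ hσ1 hC₃ xk zk xk1
    zk1 hxk hzk hxk1pos hzk1pos μk μk1 hμk hμk1 σk1 αk α hσk1 Δx Δz hDx hDz hxk1 hzk1 γ₁ hγ₁ Δx' Δz'
    hQN αdec hαdecσ hmono1 hNbr1 β C₆ hβ hC₆ hcomb1 hcomb2 hcompwise κ C₅ hκ hC₅ hαk hα rb1 rb2 rc1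
    rc2 hrb2 hrc2 R0 μ0 hR0 hμ0 hres1 hγbig xk2 zk2 hxk2 hzk2 μk2 hμk2
end

section
/- Composite two-step complementarity-product identity: under the stated setup (which does not require feasibility), x^{k+2}∘z^{k+2} = (1 − ᾱ)·(x^{k+1}∘z^{k+1}) + (ᾱ_kΔx^k + ᾱΔx′)∘(ᾱ_kΔz^k + ᾱΔz′) + ᾱσ_{k+1}μ_{k+1}·e − (1 + ᾱγ₁)·ᾱ_k²·(Δx^k∘Δz^k); in particular, taking inner products with e, (x^{k+2})ᵀz^{k+2} = (1 − ᾱ(1 − σ_{k+1}))·(x^{k+1})ᵀz^{k+1} + (ᾱ_kΔx^k + ᾱΔx′)ᵀ(ᾱ_kΔz^k + ᾱΔz′) − (1 + ᾱγ₁)·ᾱ_k²·(Δx^k)ᵀΔz^k. -/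
/-! The quasi-Newton right-hand side contains the linearization error of the previous step,
`ᾱ_k(z∘Δx + x∘Δz) − (x^{k+1}∘z^{k+1} − x∘z) = −ᾱ_k² Δx∘Δz`. Expanding
`(x^{k+1} + ᾱΔx′)∘(z^{k+1} + ᾱΔz′)` and regrouping the cross terms around the combined step
`ᾱ_kΔx + ᾱΔx′` turns the quasi-Newton equation into the componentwise identity; summing it,
the centring term `σ_{k+1}μ_{k+1}e` contributes `σ_{k+1}(x^{k+1})ᵀz^{k+1}`. -/

open Finset
open scoped BigOperators

theorem linearization_error {R : Type*} [CommRing R] (x z dx dz a : R) :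
    a * (z * dx + x * dz) - ((x + a * dx) * (z + a * dz) - x * z) = -(a ^ 2 * (dx * dz)) := by
  ring

theorem mul_eq_of_quasi_newton_step {R : Type*} [CommRing R]
    {x z dx dz dx' dz' x₁ z₁ a γ c : R} (α : R)
    (hx₁ : x₁ = x + a * dx) (hz₁ : z₁ = z + a * dz)
    (hQN : z * dx' + x * dz' = c - x₁ * z₁ + γ * (a * (z * dx + x * dz) - (x₁ * z₁ - x * z))) :
    (x₁ + α * dx') * (z₁ + α * dz')
      = (1 - α) * (x₁ * z₁) + (a * dx + α * dx') * (a * dz + α * dz') + α * c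
        - (1 + α * γ) * a ^ 2 * (dx * dz) := by
  subst hx₁ hz₁
  rw [linearization_error] at hQN
  linear_combination α * hQN

theorem composite_two_step_identity_general
    (n : ℕ)
    (xk zk Δx Δz Δx' Δz' : Fin n → ℝ)
    (σk1 αk α γ₁ : ℝ)
    (xk1 zk1 : Fin n → ℝ)
    (hxk1 : xk1 = fun i => xk i + αk * Δx i)
    (hzk1 : zk1 = fun i => zk i + αk * Δz i)
    (μk1 : ℝ) (hμk1 : μk1 = (∑ i, xk1 i * zk1 i) / n)
    (hQN : ∀ i, zk i * Δx' i + xk i * Δz' i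
      = σk1 * μk1 - xk1 i * zk1 i
        + γ₁ * (αk * (zk i * Δx i + xk i * Δz i) - (xk1 i * zk1 i - xk i * zk i)))
    (xk2 zk2 : Fin n → ℝ)
    (hxk2 : xk2 = fun i => xk1 i + α * Δx' i)
    (hzk2 : zk2 = fun i => zk1 i + α * Δz' i) :
    (∀ i, xk2 i * zk2 i
      = (1 - α) * (xk1 i * zk1 i)
        + (αk * Δx i + α * Δx' i) * (αk * Δz i + α * Δz' i)
        + α * σk1 * μk1
        - (1 + α * γ₁) * αk ^ 2 * (Δx i * Δz i)) ∧
    (∑ i, xk2 i * zk2 i)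
      = (1 - α * (1 - σk1)) * (∑ i, xk1 i * zk1 i)
        + (∑ i, (αk * Δx i + α * Δx' i) * (αk * Δz i + α * Δz' i))
        - (1 + α * γ₁) * αk ^ 2 * (∑ i, Δx i * Δz i) := by
  have hprod : ∀ i, xk2 i * zk2 i
      = (1 - α) * (xk1 i * zk1 i)
        + (αk * Δx i + α * Δx' i) * (αk * Δz i + α * Δz' i)
        + α * σk1 * μk1
        - (1 + α * γ₁) * αk ^ 2 * (Δx i * Δz i) := fun i => by
    simp only [hxk2, hzk2]
    linear_combination mul_eq_of_quasi_newton_step α (congrFun hxk1 i) (congrFun hzk1 i) (hQN i)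
  have hμ_expect : μk1 = 𝔼 i, xk1 i * zk1 i := by
    rw [hμk1, Fintype.expect_eq_sum_div_card, Fintype.card_fin]
  have hsum_μ : ∑ _i : Fin n, μk1 = ∑ i, xk1 i * zk1 i := by
    rw [sum_const, card_univ, hμ_expect, Fintype.card_smul_expect]
  refine ⟨hprod, ?_⟩
  rw [sum_congr rfl fun i _ => hprod i]
  simp only [sum_add_distrib, sum_sub_distrib, ← mul_sum]
  linear_combination α * σk1 * hsum_μ

/-- Composite two-step complementarity-product identity (no feasibility needed):
componentwise identity for `x^{k+2}∘z^{k+2}` and the resulting scalar identity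
for `(x^{k+2})ᵀ z^{k+2}`. -/
theorem composite_two_step_identity
    (n : ℕ) (hn : 1 ≤ n)
    (xk zk Δx Δz Δx' Δz' : Fin n → ℝ)
    (σk σk1 αk α γ₁ : ℝ)
    (μk : ℝ) (hμk : μk = (∑ i, xk i * zk i) / n)
    (hNewton : ∀ i, zk i * Δx i + xk i * Δz i = σk * μk - xk i * zk i)
    (xk1 zk1 : Fin n → ℝ)
    (hxk1 : xk1 = fun i => xk i + αk * Δx i)
    (hzk1 : zk1 = fun i => zk i + αk * Δz i)
    (μk1 : ℝ) (hμk1 : μk1 = (∑ i, xk1 i * zk1 i) / n)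
    (hQN : ∀ i, zk i * Δx' i + xk i * Δz' i
      = σk1 * μk1 - xk1 i * zk1 i
        + γ₁ * (αk * (zk i * Δx i + xk i * Δz i) - (xk1 i * zk1 i - xk i * zk i)))
    (xk2 zk2 : Fin n → ℝ)
    (hxk2 : xk2 = fun i => xk1 i + α * Δx' i)
    (hzk2 : zk2 = fun i => zk1 i + α * Δz' i) :
    (∀ i, xk2 i * zk2 i
      = (1 - α) * (xk1 i * zk1 i)
        + (αk * Δx i + α * Δx' i) * (αk * Δz i + α * Δz' i)
        + α * σk1 * μk1
        - (1 + α * γ₁) * αk ^ 2 * (Δx i * Δz i)) ∧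
    (∑ i, xk2 i * zk2 i)
      = (1 - α * (1 - σk1)) * (∑ i, xk1 i * zk1 i)
        + (∑ i, (αk * Δx i + α * Δx' i) * (αk * Δz i + α * Δz' i))
        - (1 + α * γ₁) * αk ^ 2 * (∑ i, Δx i * Δz i) :=
  composite_two_step_identity_general n xk zk Δx Δz Δx' Δz' σk1 αk α γ₁ xk1 zk1 hxk1 hzk1 μk1 hμk1
    hQN xk2 zk2 hxk2 hzk2
end
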